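/- Let p⁰, q₀ ∈ ℤ and P, Q ∈ M₃(ℤ) symmetric, not all zero, with R := Cof(P) + p⁰·Q positive definite and D := 2((tr(P·Q))² − tr((P·Q)²)) − (p⁰·q₀ + tr(P·Q))² + 4(p⁰·det(Q) − q₀·det(P)) > 0, and let T := (2·P·Q − (p⁰·q₀ + tr(P·Q))·E₃ + i·√D·E₃)·(2R)⁻¹ ∈ M₃(ℂ) be the corresponding complex attractor. Then, as additive subgroups of ℂ³, the subgroup ℤ³ + T·(2R)·ℤ³ (generated by the standard basis vectors of ℤ³ and the columns of the matrix T·(2R)) equals ℤ³ + i·√D·ℤ³. -/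
import Mathlib


open Matrix Complex

/-- The cofactor matrix of a 3×3 matrix: the transpose of the adjugate,
so that `Xᵀ * Cof X = det X • 1`. -/
noncomputable def Cof {R : Type*} [CommRing R] (A : Matrix (Fin 3) (Fin 3) R) :
    Matrix (Fin 3) (Fin 3) R := (Matrix.adjugate A)ᵀ

/-- `R := Cof(P) + p⁰ • Q`. -/
noncomputable def attrR (p0 : ℤ) (P Q : Matrix (Fin 3) (Fin 3) ℤ) :
    Matrix (Fin 3) (Fin 3) ℤ := Cof P + p0 • Q

/-- `D := 2((tr PQ)² − tr((PQ)²)) − (p⁰q₀ + tr PQ)² + 4(p⁰ det Q − q₀ det P)`. -/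
noncomputable def attrD (p0 q0 : ℤ) (P Q : Matrix (Fin 3) (Fin 3) ℤ) : ℤ :=
  2 * ((P * Q).trace ^ 2 - ((P * Q) * (P * Q)).trace)
    - (p0 * q0 + (P * Q).trace) ^ 2 + 4 * (p0 * Q.det - q0 * P.det)

/-- The attractor point `T = (2PQ − (p⁰q₀ + tr(PQ))E₃ + i√D·E₃)·(2R)⁻¹`. -/
noncomputable def attrT (p0 q0 : ℤ) (P Q : Matrix (Fin 3) (Fin 3) ℤ) :
    Matrix (Fin 3) (Fin 3) ℂ :=
  (Matrix.map (2 • (P * Q) - (p0 * q0 + (P * Q).trace) • 1) (fun n : ℤ => (n : ℂ))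
      + (Complex.I * (Real.sqrt ((attrD p0 q0 P Q : ℤ) : ℝ) : ℂ)) • 1)
    * (Matrix.map (2 • attrR p0 P Q) (fun n : ℤ => (n : ℂ)))⁻¹

/-- The lattice identity underlying the isogeny `(E_√−D)³ → X_T`: for the complex
attractor `T`, the additive subgroup `ℤ³ + T·(2R)·ℤ³` of `ℂ³` equals
`ℤ³ + i·√D·ℤ³`. -/
theorem attractor_lattice_eq (p0 q0 : ℤ) (P Q : Matrix (Fin 3) (Fin 3) ℤ)
    (hP : Pᵀ = P) (hQ : Qᵀ = Q)
    (hnz : ¬(p0 = 0 ∧ q0 = 0 ∧ P = 0 ∧ Q = 0))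
    (hR : (Matrix.map (attrR p0 P Q) (fun n : ℤ => (n : ℝ))).PosDef)
    (hD : 0 < attrD p0 q0 P Q) :
    {x : Fin 3 → ℂ | ∃ a b : Fin 3 → ℤ,
        x = (fun i => ((a i : ℤ) : ℂ)) +
          (attrT p0 q0 P Q * Matrix.map (2 • attrR p0 P Q) (fun n : ℤ => (n : ℂ))).mulVec
            (fun i => ((b i : ℤ) : ℂ))} =
      {x : Fin 3 → ℂ | ∃ a b : Fin 3 → ℤ,
        x = (fun i => ((a i : ℤ) : ℂ)) +
          fun i => Complex.I * (Real.sqrt ((attrD p0 q0 P Q : ℤ) : ℝ) : ℂ) * ((b i : ℤ) : ℂ)} := by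
  set M : Matrix (Fin 3) (Fin 3) ℤ :=
    2 • (P * Q) - (p0 * q0 + (P * Q).trace) • 1 with hM
  set c : ℂ := Complex.I * (Real.sqrt ((attrD p0 q0 P Q : ℤ) : ℝ) : ℂ) with hc
  set B : Matrix (Fin 3) (Fin 3) ℂ :=
    Matrix.map (2 • attrR p0 P Q) (fun n : ℤ => (n : ℂ)) with hB
  -- det of R is nonzero over ℤ
  have hdetR : (attrR p0 P Q).det ≠ 0 := by
    have h1 : (0 : ℝ) < (Matrix.map (attrR p0 P Q) (fun n : ℤ => (n : ℝ))).det := hR.det_pos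
    have h2 : (Matrix.map (attrR p0 P Q) (fun n : ℤ => (n : ℝ))).det
        = ((attrR p0 P Q).det : ℝ) := ((Int.castRingHom ℝ).map_det _).symm
    intro h
    rw [h2, h] at h1
    simp at h1
  have hdetB : IsUnit B.det := by
    rw [hB]
    have : (Matrix.map (2 • attrR p0 P Q) (fun n : ℤ => (n : ℂ))).det
        = (((2 • attrR p0 P Q : Matrix (Fin 3) (Fin 3) ℤ)).det : ℂ) :=
      ((Int.castRingHom ℂ).map_det _).symm
    rw [this, isUnit_iff_ne_zero]
    have : ((2 • attrR p0 P Q : Matrix (Fin 3) (Fin 3) ℤ)).det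
        = 2 ^ 3 * (attrR p0 P Q).det := by
      rw [show (2 • attrR p0 P Q) = (2:ℤ) • attrR p0 P Q from by
        ext i j; simp, Matrix.det_smul]
      simp
    rw [this]
    exact_mod_cast mul_ne_zero (by norm_num) hdetR
  -- key identity : T * (2R) = map M + c • 1
  have hkey : attrT p0 q0 P Q * B
      = Matrix.map M (fun n : ℤ => (n : ℂ)) + c • 1 := by
    rw [attrT, ← hB, ← hM, ← hc]
    exact Matrix.nonsing_inv_mul_cancel_right B _ hdetB
  -- cast mulVec lemma
  have hcast : ∀ (N : Matrix (Fin 3) (Fin 3) ℤ) (b : Fin 3 → ℤ),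
      (Matrix.map N (fun n : ℤ => (n : ℂ))).mulVec (fun i => ((b i : ℤ) : ℂ))
        = fun i => ((N.mulVec b i : ℤ) : ℂ) := by
    intro N b
    funext i
    exact (RingHom.map_mulVec (Int.castRingHom ℂ) N b i).symm
  ext x
  simp only [Set.mem_setOf_eq, hkey]
  constructor
  · rintro ⟨a, b, rfl⟩
    refine ⟨a + M.mulVec b, b, ?_⟩
    funext i
    simp [Matrix.add_mulVec, hcast M b, Matrix.smul_mulVec, Matrix.one_mulVec,
      Pi.smul_apply, smul_eq_mul]
    push_cast
    ring
  · rintro ⟨a, b, rfl⟩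
    refine ⟨a - M.mulVec b, b, ?_⟩
    funext i
    simp [Matrix.add_mulVec, hcast M b, Matrix.smul_mulVec, Matrix.one_mulVec,
      Pi.smul_apply, smul_eq_mul]
    push_cast
    ring
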